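/- For all constants μ > 0, c₀ > 0, c₁ > 0, c₂ > 0 and every B ∈ (0,1), the equation (c₁/(2c₀) - 1)·ln((1-A)/(1+A)) + (2/(1+A))·(c₁/(2c₀) + A/(1-A)) = c₁/(c₀·(1-B²)) has exactly one solution A in the open interval (0,1). -/

import Mathlib

/-!
In the variable `t = (1 - A) / (1 + A)`, an involution of `(0, 1)`, the left side of (A) becomes
`(k - 1) log t + k (1 + t) + (1/t - t)/2` with `k = c₁/(2c₀)`. Its derivative
`(t + 1)((2k - 1)t - 1)/(2t²)` changes sign at most once, so it decreases on `(0, m]` and increases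
on `[m, 1]`. It tends to `+∞` as `t → 0⁺` (the `1/(2t)` term beats the logarithm) and equals
`2k = c₁/c₀ < c₁/(c₀(1 - B²))` at `t = 1`, so the right side is attained exactly once, on the
decreasing branch.
-/

open Real Set Filter Topology

theorem existsUnique_eq_of_strictAntiOn_of_monotoneOn {f : ℝ → ℝ} {a m b T : ℝ}
    (hm : m ∈ Ioc a b) (hf : ContinuousOn f (Ioc a b)) (hanti : StrictAntiOn f (Ioc a m))
    (hmono : MonotoneOn f (Icc m b)) (hfb : f b < T) (hlim : Tendsto f (𝓝[>] a) atTop) :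
    ∃! x, x ∈ Ioo a b ∧ f x = T := by
  have hab : a < b := hm.1.trans_le hm.2
  -- beyond `m` we have `f ≤ f b < T`
  have below_m : ∀ x ∈ Ioo a b, f x = T → x ∈ Ioc a m := fun x hx hfx ↦
    ⟨hx.1, not_lt.1 fun hmx ↦ (hmono ⟨hmx.le, hx.2.le⟩ ⟨hm.2, le_rfl⟩ hx.2.le).not_gt (hfx ▸ hfb)⟩
  obtain ⟨y, hyT, hy⟩ : ∃ y, T < f y ∧ y ∈ Ioo a b :=
    ((hlim.eventually_gt_atTop T).and (Ioo_mem_nhdsGT hab)).exists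
  obtain ⟨x, hx, hfx⟩ : T ∈ f '' Icc y b :=
    intermediate_value_Icc' hy.2.le (hf.mono fun z hz ↦ ⟨hy.1.trans_le hz.1, hz.2⟩) ⟨hfb.le, hyT.le⟩
  have hxb : x ≠ b := by rintro rfl; exact hfb.ne hfx
  have hxab : x ∈ Ioo a b := ⟨hy.1.trans_le hx.1, lt_of_le_of_ne hx.2 hxb⟩
  exact ⟨x, ⟨hxab, hfx⟩, fun x' ⟨hx', hfx'⟩ ↦
    hanti.injOn (below_m x' hx' hfx') (below_m x hxab hfx) (hfx'.trans hfx.symm)⟩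

theorem existsUnique_mem_comp_of_involutiveOn {α : Type*} {s : Set α} {φ : α → α}
    {P : α → Prop} (hφ : MapsTo φ s s) (hinv : ∀ x ∈ s, φ (φ x) = x) (h : ∃! t, t ∈ s ∧ P t) :
    ∃! x, x ∈ s ∧ P (φ x) := by
  obtain ⟨t, ⟨hts, hPt⟩, huniq⟩ := h
  refine ⟨φ t, ⟨hφ hts, by rwa [hinv t hts]⟩, ?_⟩
  rintro x ⟨hxs, hPx⟩
  rw [← hinv x hxs, huniq (φ x) ⟨hφ hxs, hPx⟩]

/-- The left side of (A) with `k = c₁/(2c₀)`, written in the variable `t = (1-A)/(1+A)`. -/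
noncomputable def lhsT (k t : ℝ) : ℝ := (k - 1) * log t + k * (1 + t) + (t⁻¹ - t) / 2

lemma lhsT_one (k : ℝ) : lhsT k 1 = 2 * k := by
  norm_num [lhsT]; ring

lemma hasDerivAt_lhsT (k : ℝ) {t : ℝ} (ht : t ≠ 0) :
    HasDerivAt (lhsT k) ((t + 1) * ((2 * k - 1) * t - 1) / (2 * t ^ 2)) t := by
  refine ((((hasDerivAt_log ht).const_mul (k - 1)).add
    (((hasDerivAt_id t).const_add 1).const_mul k)).add
    (((hasDerivAt_inv ht).sub (hasDerivAt_id t)).div_const 2)).congr_deriv ?_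
  field_simp
  ring

lemma continuousOn_lhsT (k : ℝ) : ContinuousOn (lhsT k) (Ioi 0) := fun _ ht ↦
  (hasDerivAt_lhsT k (ne_of_gt ht)).continuousAt.continuousWithinAt

lemma tendsto_lhsT_nhdsGT_zero (k : ℝ) : Tendsto (lhsT k) (𝓝[>] 0) atTop := by
  set F : ℝ → ℝ := fun t ↦ (k - 1) * (t * log t) + k * t * (1 + t) + (1 - t ^ 2) / 2
  have hF : Tendsto F (𝓝[>] 0) (𝓝 (1 / 2)) := by
    have hcont : Continuous F := by unfold F; fun_prop
    simpa [F] using (hcont.tendsto 0).mono_left nhdsWithin_le_nhds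
  refine (hF.pos_mul_atTop one_half_pos tendsto_inv_nhdsGT_zero).congr' ?_
  filter_upwards [self_mem_nhdsWithin] with t (ht : 0 < t)
  simp only [F, lhsT]
  field_simp

lemma strictAntiOn_lhsT (k : ℝ) : StrictAntiOn (lhsT k) (Ioc 0 (max 1 (2 * k - 1))⁻¹) := by
  refine strictAntiOn_of_deriv_neg (convex_Ioc _ _)
    ((continuousOn_lhsT k).mono Ioc_subset_Ioi_self) fun t ht ↦ ?_
  rw [interior_Ioc] at ht
  obtain ⟨ht0, htm⟩ := ht
  have hM : 0 < max 1 (2 * k - 1) := lt_max_of_lt_left one_pos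
  have hMt : max 1 (2 * k - 1) * t < 1 := by
    simpa [hM.ne'] using mul_lt_mul_of_pos_left htm hM
  rw [(hasDerivAt_lhsT k ht0.ne').deriv]
  have hnum : (2 * k - 1) * t - 1 < 0 := by nlinarith [le_max_right 1 (2 * k - 1)]
  exact div_neg_of_neg_of_pos (mul_neg_of_pos_of_neg (by linarith) hnum) (by positivity)

lemma monotoneOn_lhsT (k : ℝ) : MonotoneOn (lhsT k) (Icc (max 1 (2 * k - 1))⁻¹ 1) := by
  have hM : 0 < max 1 (2 * k - 1) := lt_max_of_lt_left one_pos
  have hpos : Icc (max 1 (2 * k - 1))⁻¹ 1 ⊆ Ioi 0 := fun t ht ↦ (inv_pos.2 hM).trans_le ht.1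
  refine monotoneOn_of_deriv_nonneg (convex_Icc _ _) ((continuousOn_lhsT k).mono hpos)
    (fun t ht ↦ (hasDerivAt_lhsT k (ne_of_gt (hpos (interior_subset ht)))).differentiableAt
      |>.differentiableWithinAt) fun t ht ↦ ?_
  rw [interior_Icc] at ht
  obtain ⟨htm, ht1⟩ := ht
  have ht0 : 0 < t := (inv_pos.2 hM).trans htm
  have hMt : 1 < max 1 (2 * k - 1) * t := by
    simpa [hM.ne'] using mul_lt_mul_of_pos_left htm hM
  -- `t < 1` rules out `max 1 (2k - 1) = 1`
  have hnum : 0 ≤ (2 * k - 1) * t - 1 := by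
    rcases max_cases 1 (2 * k - 1) with ⟨h, -⟩ | ⟨h, -⟩ <;> rw [h] at hMt <;> linarith
  rw [(hasDerivAt_lhsT k ht0.ne').deriv]
  positivity

lemma mapsTo_one_sub_div_one_add : MapsTo (fun A : ℝ ↦ (1 - A) / (1 + A)) (Ioo 0 1) (Ioo 0 1) :=
  fun A ⟨hA0, hA1⟩ ↦
    ⟨div_pos (by linarith) (by linarith), (div_lt_one (by linarith)).2 (by linarith)⟩

lemma one_sub_div_one_add_involutive {A : ℝ} (hA : 1 + A ≠ 0) :
    (1 - (1 - A) / (1 + A)) / (1 + (1 - A) / (1 + A)) = A := by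
  field_simp
  ring

lemma eqA_lhs_eq_lhsT (k : ℝ) {A : ℝ} (hA : A ∈ Ioo 0 1) :
    (k - 1) * log ((1 - A) / (1 + A)) + (2 / (1 + A)) * (k + A / (1 - A)) =
      lhsT k ((1 - A) / (1 + A)) := by
  have h1 : 1 - A ≠ 0 := by linarith [hA.2]
  have h2 : 1 + A ≠ 0 := by linarith [hA.1]
  unfold lhsT
  field_simp
  ring

theorem eqA_existsUnique (c₀ c₁ : ℝ) (hc₀ : 0 < c₀) (hc₁ : 0 < c₁)
    (B : ℝ) (hB : B ∈ Set.Ioo (0 : ℝ) 1) :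
    ∃! A : ℝ, A ∈ Set.Ioo (0 : ℝ) 1 ∧
      (c₁ / (2 * c₀) - 1) * Real.log ((1 - A) / (1 + A))
        + (2 / (1 + A)) * (c₁ / (2 * c₀) + A / (1 - A)) = c₁ / (c₀ * (1 - B ^ 2)) := by
  obtain ⟨hB0, hB1⟩ := hB
  have hT : lhsT (c₁ / (2 * c₀)) 1 < c₁ / (c₀ * (1 - B ^ 2)) :=
    calc lhsT (c₁ / (2 * c₀)) 1 = c₁ / c₀ := by rw [lhsT_one]; field_simp
      _ < c₁ / (c₀ * (1 - B ^ 2)) :=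
        div_lt_div_of_pos_left hc₁ (mul_pos hc₀ (by nlinarith))
          (by nlinarith [mul_pos hc₀ (pow_pos hB0 2)])
  have ht := existsUnique_eq_of_strictAntiOn_of_monotoneOn
    ⟨by positivity, inv_le_one_of_one_le₀ (le_max_left _ _)⟩
    ((continuousOn_lhsT _).mono Ioc_subset_Ioi_self) (strictAntiOn_lhsT _) (monotoneOn_lhsT _)
    hT (tendsto_lhsT_nhdsGT_zero _)
  refine (existsUnique_congr fun A ↦ ?_).2 (existsUnique_mem_comp_of_involutiveOn
    mapsTo_one_sub_div_one_add (fun A hA ↦ one_sub_div_one_add_involutive (by linarith [hA.1])) ht)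
  exact and_congr_right fun hA ↦ by rw [eqA_lhs_eq_lhsT _ hA]
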